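/- Let $U_n, V_n$ be sequences of random variables and $a_n, b_n, u_n, v_n$ non-random sequences with $a_n, b_n \to \infty$, $u_n \to \theta_U \in \mathbb{R}$, $v_n \to \theta_V \neq 0$, and suppose $a_n(U_n - u_n) \to N(0,\sigma_U^2)$ and $b_n(V_n - v_n) \to N(0,\sigma_V^2)$ in distribution. If $a_n/b_n \to \infty$, then $b_n(U_n/V_n - u_n/v_n) \to N(0, \theta_U^2 \sigma_V^2/\theta_V^4)$ in distribution. -/

import Mathlib

open MeasureTheory ProbabilityTheory Filter Topology BoundedContinuousFunction
open scoped NNReal ENNReal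

/-- Convergence in distribution of a sequence of real random variables to a limit law. -/
def TendstoInDist {Ω : Type*} [MeasurableSpace Ω] (μ : Measure Ω)
    (X : ℕ → Ω → ℝ) (ν : Measure ℝ) : Prop :=
  ∀ f : ℝ →ᵇ ℝ, Tendsto (fun n => ∫ ω, f (X n ω) ∂μ) atTop (𝓝 (∫ x, f x ∂ν))

namespace SlutskyAux

variable {Ω : Type*} [MeasurableSpace Ω] (μ : Measure Ω)

/-- Convergence in probability to zero. -/
def TendstoP (W : ℕ → Ω → ℝ) : Prop :=
  ∀ ε : ℝ, 0 < ε → ∀ η : ℝ≥0∞, 0 < η → ∀ᶠ n in atTop, μ {ω | ε ≤ |W n ω|} ≤ η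

/-- Tightness (uniform, eventual) of a sequence of random variables. -/
def Tight (X : ℕ → Ω → ℝ) : Prop :=
  ∀ η : ℝ≥0∞, 0 < η → ∃ M : ℝ, 0 < M ∧ ∀ᶠ n in atTop, μ {ω | M ≤ |X n ω|} ≤ η

variable {μ}

theorem TendstoP.congr {W W' : ℕ → Ω → ℝ} (h : TendstoP μ W)
    (he : ∀ᶠ n in atTop, ∀ ω, W n ω = W' n ω) : TendstoP μ W' := by
  intro ε hε η hη
  filter_upwards [h ε hε η hη, he] with n h1 h2
  have : {ω | ε ≤ |W' n ω|} = {ω | ε ≤ |W n ω|} := by ext ω; simp only [Set.mem_setOf_eq, h2]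
  rwa [this]

theorem TendstoP.neg {W : ℕ → Ω → ℝ} (h : TendstoP μ W) :
    TendstoP μ (fun n ω => -W n ω) := by
  intro ε hε η hη
  filter_upwards [h ε hε η hη] with n h1
  simpa only [abs_neg] using h1

theorem TendstoP.add {W W' : ℕ → Ω → ℝ} (h : TendstoP μ W) (h' : TendstoP μ W') :
    TendstoP μ (fun n ω => W n ω + W' n ω) := by
  intro ε hε η hη
  filter_upwards [h (ε/2) (by positivity) (η/2) (ENNReal.half_pos hη.ne'),
    h' (ε/2) (by positivity) (η/2) (ENNReal.half_pos hη.ne')] with n h1 h2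
  calc μ {ω | ε ≤ |W n ω + W' n ω|}
      ≤ μ ({ω | ε/2 ≤ |W n ω|} ∪ {ω | ε/2 ≤ |W' n ω|}) := by
        refine measure_mono fun ω hω => ?_
        simp only [Set.mem_setOf_eq, Set.mem_union] at *
        by_contra hc
        push_neg at hc
        have := abs_add_le (W n ω) (W' n ω)
        linarith [hc.1, hc.2]
    _ ≤ μ {ω | ε/2 ≤ |W n ω|} + μ {ω | ε/2 ≤ |W' n ω|} := measure_union_le _ _
    _ ≤ η/2 + η/2 := add_le_add h1 h2
    _ = η := ENNReal.add_halves η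

theorem tendstoP_det {t : ℕ → ℝ} (h : Tendsto t atTop (𝓝 0)) :
    TendstoP μ (fun n _ => t n) := by
  intro ε hε η hη
  filter_upwards [NormedAddCommGroup.tendsto_nhds_zero.mp h ε hε] with n hn
  have : {ω : Ω | ε ≤ |t n|} = ∅ := by
    ext ω
    simp only [Set.mem_setOf_eq, Set.mem_empty_iff_false, iff_false, not_le]
    simpa [Real.norm_eq_abs] using hn
  simp [this]

theorem TendstoP.smul_bdd {r : ℕ → ℝ} {W : ℕ → Ω → ℝ} {B : ℝ}
    (hr : ∀ᶠ n in atTop, |r n| ≤ B) (h : TendstoP μ W) :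
    TendstoP μ (fun n ω => r n * W n ω) := by
  intro ε hε η hη
  have hB : 0 ≤ B := by
    obtain ⟨n, hn⟩ := hr.exists
    exact (abs_nonneg _).trans hn
  filter_upwards [h (ε/(B+1)) (by positivity) η hη, hr] with n h1 h2
  refine le_trans (measure_mono fun ω hω => ?_) h1
  simp only [Set.mem_setOf_eq] at *
  rw [div_le_iff₀ (by linarith)]
  calc ε ≤ |r n * W n ω| := hω
    _ = |r n| * |W n ω| := abs_mul _ _
    _ ≤ B * |W n ω| := mul_le_mul_of_nonneg_right h2 (abs_nonneg _)
    _ ≤ |W n ω| * (B+1) := by nlinarith [abs_nonneg (W n ω)]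

theorem TendstoP.mul {A G : ℕ → Ω → ℝ} {γ : ℝ} (hA : TendstoP μ A)
    (hG : TendstoP μ (fun n ω => G n ω - γ)) :
    TendstoP μ (fun n ω => A n ω * G n ω) := by
  intro ε hε η hη
  filter_upwards [hA (ε/(|γ|+1)) (by positivity) (η/2) (ENNReal.half_pos hη.ne'),
    hG 1 one_pos (η/2) (ENNReal.half_pos hη.ne')] with n h1 h2
  calc μ {ω | ε ≤ |A n ω * G n ω|}
      ≤ μ ({ω | ε/(|γ|+1) ≤ |A n ω|} ∪ {ω | (1:ℝ) ≤ |G n ω - γ|}) := by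
        refine measure_mono fun ω hω => ?_
        simp only [Set.mem_setOf_eq, Set.mem_union] at *
        by_contra hc
        push_neg at hc
        have hGb : |G n ω| ≤ |γ| + 1 := by
          have := abs_sub_abs_le_abs_sub (G n ω) γ
          linarith [hc.2]
        have h3 : |A n ω| * (|γ|+1) < ε := (lt_div_iff₀ (by positivity)).mp hc.1
        have h4 : |A n ω * G n ω| ≤ |A n ω| * (|γ|+1) := by
          rw [abs_mul]
          exact mul_le_mul_of_nonneg_left hGb (abs_nonneg _)
        linarith
    _ ≤ _ := measure_union_le _ _
    _ ≤ η/2 + η/2 := add_le_add h1 h2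
    _ = η := ENNReal.add_halves η

theorem TendstoP.comp_continuousAt {V : ℕ → Ω → ℝ} {θ : ℝ} {g : ℝ → ℝ}
    (hV : TendstoP μ (fun n ω => V n ω - θ)) (hg : ContinuousAt g θ) :
    TendstoP μ (fun n ω => g (V n ω) - g θ) := by
  intro ε hε η hη
  obtain ⟨δ, hδpos, hδ⟩ := Metric.continuousAt_iff.mp hg ε hε
  filter_upwards [hV δ hδpos η hη] with n hn
  refine le_trans (measure_mono fun ω hω => ?_) hn
  simp only [Set.mem_setOf_eq] at *
  by_contra hc
  push_neg at hc
  have := hδ (x := V n ω) (by rwa [Real.dist_eq])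
  rw [Real.dist_eq] at this
  linarith

theorem Tight.mulP {X R : ℕ → Ω → ℝ} (hX : Tight μ X) (hR : TendstoP μ R) :
    TendstoP μ (fun n ω => R n ω * X n ω) := by
  intro ε hε η hη
  obtain ⟨M, hM, hMev⟩ := hX (η/2) (ENNReal.half_pos hη.ne')
  filter_upwards [hMev, hR (ε/M) (by positivity) (η/2) (ENNReal.half_pos hη.ne')] with n h1 h2
  calc μ {ω | ε ≤ |R n ω * X n ω|}
      ≤ μ ({ω | M ≤ |X n ω|} ∪ {ω | ε/M ≤ |R n ω|}) := by
        refine measure_mono fun ω hω => ?_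
        simp only [Set.mem_setOf_eq, Set.mem_union] at *
        by_contra hc
        push_neg at hc
        have h3 : |R n ω| * M < ε := (lt_div_iff₀ hM).mp hc.2
        have h4 : |R n ω * X n ω| ≤ |R n ω| * M := by
          rw [abs_mul]
          exact mul_le_mul_of_nonneg_left hc.1.le (abs_nonneg _)
        linarith
    _ ≤ _ := measure_union_le _ _
    _ ≤ η/2 + η/2 := add_le_add h1 h2
    _ = η := ENNReal.add_halves η

theorem integrable_comp_bcf [IsFiniteMeasure μ] (f : ℝ →ᵇ ℝ) {X : Ω → ℝ}
    (hX : Measurable X) : Integrable (fun ω => f (X ω)) μ := by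
  refine Integrable.mono' (integrable_const ‖f‖)
    ((f.continuous.measurable.comp hX).aestronglyMeasurable)
    (ae_of_all _ fun ω => f.norm_coe_le_norm _)

theorem tight_of_tendstoInDist [IsProbabilityMeasure μ] {X : ℕ → Ω → ℝ} {ν : Measure ℝ}
    [IsProbabilityMeasure ν] (hm : ∀ n, Measurable (X n)) (h : TendstoInDist μ X ν) :
    Tight μ X := by
  have core : ∀ ε : ℝ, 0 < ε → ∃ M : ℝ, 0 < M ∧
      ∀ᶠ n in atTop, (μ {ω | M ≤ |X n ω|}).toReal < ε := by
    intro ε hε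
    -- choose K with ν (Icc (-K) K) close to 1
    obtain ⟨K, hK⟩ : ∃ K : ℕ, 1 - ε/2 < (ν (Set.Icc (-(K:ℝ)) K)).toReal := by
      have hmono : Monotone (fun k : ℕ => Set.Icc (-(k:ℝ)) (k:ℝ)) := by
        intro i j hij
        apply Set.Icc_subset_Icc <;> · simp; exact_mod_cast hij
      have hU : (⋃ k : ℕ, Set.Icc (-(k:ℝ)) (k:ℝ)) = Set.univ := by
        ext x
        simp only [Set.mem_iUnion, Set.mem_Icc, Set.mem_univ, iff_true]
        obtain ⟨k, hk⟩ := exists_nat_ge |x|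
        exact ⟨k, by cases abs_le.mp hk; constructor <;> linarith⟩
      have h1 := tendsto_measure_iUnion_atTop (μ := ν) hmono
      rw [hU, measure_univ] at h1
      have h2 := (ENNReal.tendsto_toReal (by simp : (1:ℝ≥0∞) ≠ ⊤)).comp h1
      simp only [ENNReal.toReal_one] at h2
      exact (h2.eventually (eventually_gt_nhds (by linarith))).exists
    set Kset : Set ℝ := Set.Icc (-(K:ℝ)) (K:ℝ) with hKset
    have hKne : Kset.Nonempty := ⟨0, by constructor <;> simp⟩
    -- the bump function
    set gfun : ℝ → ℝ := fun x => max (1 - Metric.infDist x Kset) 0 with hgfun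
    have gcont : Continuous gfun :=
      ((continuous_const.sub (Metric.continuous_infDist_pt Kset)).max continuous_const)
    have g01 : ∀ x, 0 ≤ gfun x ∧ gfun x ≤ 1 := fun x =>
      ⟨le_max_right _ _, max_le (by linarith [Metric.infDist_nonneg (x := x) (s := Kset)])
        zero_le_one⟩
    set g : ℝ →ᵇ ℝ := ⟨⟨gfun, gcont⟩, 1, fun x y => by
      rw [Real.dist_eq, abs_le]
      have := g01 x; have := g01 y
      constructor <;> · simp only [ContinuousMap.coe_mk]; linarith [this.1, this.2]⟩ with hg
    have hgapp : ∀ x, g x = gfun x := fun _ => rfl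
    have hg1 : ∀ x ∈ Kset, gfun x = 1 := by
      intro x hx
      simp [hgfun, Metric.infDist_zero_of_mem hx]
    have hg0 : ∀ x : ℝ, (K:ℝ) + 1 ≤ |x| → gfun x = 0 := by
      intro x hx
      have hinf : 1 ≤ Metric.infDist x Kset := by
        by_contra hc
        push_neg at hc
        obtain ⟨y, hy, hxy⟩ := (Metric.infDist_lt_iff hKne).mp hc
        rw [Real.dist_eq] at hxy
        have hyb : |y| ≤ (K:ℝ) := abs_le.mpr ⟨hy.1, hy.2⟩
        have := abs_sub_abs_le_abs_sub x y
        linarith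
      simp only [hgfun]
      exact max_eq_right (by linarith)
    -- ∫ g dν ≥ ν Kset
    have hint1 : (ν Kset).toReal ≤ ∫ x, g x ∂ν := by
      have hKm : MeasurableSet Kset := measurableSet_Icc
      have : ∫ x, Kset.indicator (fun _ => (1:ℝ)) x ∂ν = (ν Kset).toReal := by
        rw [integral_indicator_const _ hKm]; simp; rfl
      rw [← this]
      refine integral_mono ((integrable_const (1:ℝ)).indicator hKm)
        (integrable_comp_bcf g measurable_id) fun x => ?_
      by_cases hx : x ∈ Kset
      · simp [Set.indicator_of_mem hx, hgapp, hg1 x hx]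
      · simp only [Set.indicator_of_notMem hx, hgapp]
        exact (g01 x).1
    have hlim := h g
    have hev := hlim.eventually (eventually_gt_nhds (lt_of_lt_of_le hK hint1))
    refine ⟨(K:ℝ) + 2, by positivity, ?_⟩
    filter_upwards [hev] with n hn
    set S : Set Ω := {ω | |X n ω| ≤ (K:ℝ) + 1} with hS
    have hSm : MeasurableSet S := measurableSet_le (hm n).abs measurable_const
    have hle : ∫ ω, g (X n ω) ∂μ ≤ (μ S).toReal := by
      have : ∫ ω, S.indicator (fun _ => (1:ℝ)) ω ∂μ = (μ S).toReal := by
        rw [integral_indicator_const _ hSm]; simp; rfl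
      rw [← this]
      refine integral_mono (integrable_comp_bcf g (hm n))
        ((integrable_const (1:ℝ)).indicator hSm) fun ω => ?_
      by_cases hω : ω ∈ S
      · simp only [Set.indicator_of_mem hω, hgapp]
        exact (g01 _).2
      · simp only [Set.indicator_of_notMem hω, hgapp]
        have : (K:ℝ) + 1 ≤ |X n ω| := by
          simp only [hS, Set.mem_setOf_eq, not_le] at hω
          linarith
        rw [hg0 _ this]
    have hsum : (μ S).toReal + (μ Sᶜ).toReal = 1 := by
      have := measure_add_measure_compl (μ := μ) hSm
      rw [measure_univ] at this
      have h2 := congrArg ENNReal.toReal this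
      rwa [ENNReal.toReal_add (measure_ne_top _ _) (measure_ne_top _ _), ENNReal.toReal_one] at h2
    have hcompl : (μ Sᶜ).toReal < ε := by nlinarith [hn, hle]
    refine lt_of_le_of_lt (ENNReal.toReal_mono (measure_ne_top _ _) (measure_mono ?_)) hcompl
    intro ω hω
    simp only [Set.mem_setOf_eq] at hω
    simp only [hS, Set.mem_compl_iff, Set.mem_setOf_eq, not_le]
    linarith
  intro η hη
  rcases eq_or_ne η ⊤ with rfl | hηtop
  · exact ⟨1, one_pos, Eventually.of_forall fun n => le_top⟩
  have hηr : 0 < η.toReal := ENNReal.toReal_pos hη.ne' hηtop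
  obtain ⟨M, hM, hMev⟩ := core η.toReal hηr
  refine ⟨M, hM, ?_⟩
  filter_upwards [hMev] with n hn
  exact ((ENNReal.toReal_lt_toReal (measure_ne_top _ _) hηtop).mp hn).le

theorem slutsky [IsProbabilityMeasure μ] {X Z : ℕ → Ω → ℝ} {ν : Measure ℝ}
    [IsProbabilityMeasure ν] (hXm : ∀ n, Measurable (X n)) (hZm : ∀ n, Measurable (Z n))
    (hX : TendstoInDist μ X ν) (c : ℝ)
    (hP : TendstoP μ (fun n ω => Z n ω - c * X n ω)) :
    TendstoInDist μ Z (ν.map (fun x => c * x)) := by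
  have hTight := tight_of_tendstoInDist hXm hX
  intro f
  have hcm : Measurable fun x : ℝ => c * x := measurable_id.const_mul c
  have hmap : ∫ x, f x ∂(ν.map (fun x => c * x)) = ∫ x, f (c * x) ∂ν :=
    integral_map hcm.aemeasurable f.continuous.aestronglyMeasurable
  set g : ℝ →ᵇ ℝ := f.compContinuous ⟨fun x => c * x, by continuity⟩ with hgdef
  have hgapp : ∀ x, g x = f (c * x) := fun _ => rfl
  have hgX := hX g
  have hgint : ∫ x, g x ∂ν = ∫ x, f (c * x) ∂ν := by
    refine integral_congr_ae (ae_of_all _ fun x => hgapp x)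
  rw [hgint] at hgX
  have key : Tendsto (fun n => (∫ ω, f (Z n ω) ∂μ) - ∫ ω, g (X n ω) ∂μ) atTop (𝓝 0) := by
    rw [NormedAddCommGroup.tendsto_nhds_zero]
    intro ε hε
    set C : ℝ := ‖f‖ with hC
    have hC0 : 0 ≤ C := norm_nonneg f
    have hfb : ∀ x, |f x| ≤ C := fun x => f.norm_coe_le_norm x
    set η₀ : ℝ≥0∞ := ENNReal.ofReal (ε/(8*(C+1))) with hη₀
    have hη₀pos : 0 < η₀ := ENNReal.ofReal_pos.mpr (by positivity)
    obtain ⟨M, hM, hMev⟩ := hTight η₀ hη₀pos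
    set K : ℝ := |c| * M + 1 with hK
    have hUC := (isCompact_Icc (a := -K) (b := K)).uniformContinuousOn_of_continuous
      f.continuous.continuousOn
    rw [Metric.uniformContinuousOn_iff] at hUC
    obtain ⟨δ, hδpos, hδ⟩ := hUC (ε/4) (by positivity)
    set δ' : ℝ := min δ 1 with hδ'
    have hδ'pos : 0 < δ' := lt_min hδpos one_pos
    filter_upwards [hMev, hP δ' hδ'pos η₀ hη₀pos] with n h1 h2
    set Bad : Set Ω := {ω | M ≤ |X n ω|} ∪ {ω | δ' ≤ |Z n ω - c * X n ω|} with hBad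
    have hBadm : MeasurableSet Bad :=
      (measurableSet_le measurable_const (hXm n).abs).union
        (measurableSet_le measurable_const ((hZm n).sub ((hXm n).const_mul c)).abs)
    have hptwise : ∀ ω, |f (Z n ω) - f (c * X n ω)| ≤
        ε/4 + Bad.indicator (fun _ => 2*C) ω := by
      intro ω
      by_cases hω : ω ∈ Bad
      · rw [Set.indicator_of_mem hω]
        have := hfb (Z n ω); have := hfb (c * X n ω)
        have := abs_sub (f (Z n ω)) (f (c * X n ω))
        calc |f (Z n ω) - f (c * X n ω)| ≤ |f (Z n ω)| + |f (c * X n ω)| := abs_sub _ _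
          _ ≤ 2*C := by linarith [hfb (Z n ω), hfb (c * X n ω)]
          _ ≤ ε/4 + 2*C := by linarith
      · rw [Set.indicator_of_notMem hω]
        simp only [hBad, Set.mem_union, Set.mem_setOf_eq, not_or, not_le] at hω
        have hXb : |X n ω| < M := hω.1
        have hZb : |Z n ω - c * X n ω| < δ' := hω.2
        have hcX : c * X n ω ∈ Set.Icc (-K) K := by
          have : |c * X n ω| ≤ K := by
            rw [abs_mul]
            nlinarith [abs_nonneg c, abs_nonneg (X n ω)]
          exact abs_le.mp this |>.imp id id |> fun h => ⟨h.1, h.2⟩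
        have hZK : Z n ω ∈ Set.Icc (-K) K := by
          have h3 : |Z n ω| ≤ |Z n ω - c * X n ω| + |c * X n ω| := by
            have := abs_add_le (Z n ω - c * X n ω) (c * X n ω)
            simpa using this
          have h4 : |c * X n ω| ≤ |c| * M := by
            rw [abs_mul]
            nlinarith [abs_nonneg c]
          have h5 : δ' ≤ 1 := min_le_right _ _
          have : |Z n ω| ≤ K := by simp only [hK]; linarith
          exact abs_le.mp this |> fun h => ⟨h.1, h.2⟩
        have := hδ (Z n ω) hZK (c * X n ω) hcX
          (by rw [Real.dist_eq]; exact lt_of_lt_of_le hZb (min_le_left _ _))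
        rw [Real.dist_eq] at this
        linarith
    have hint1 : Integrable (fun ω => f (Z n ω)) μ := integrable_comp_bcf f (hZm n)
    have hint2 : Integrable (fun ω => g (X n ω)) μ := integrable_comp_bcf g (hXm n)
    have hgXeq : (fun ω => g (X n ω)) = fun ω => f (c * X n ω) := by
      funext ω; exact hgapp _
    have hμBad : (μ Bad).toReal ≤ ε/(4*(C+1)) := by
      have hle : μ Bad ≤ η₀ + η₀ :=
        le_trans (measure_union_le _ _) (add_le_add h1 h2)
      have : (μ Bad).toReal ≤ (η₀ + η₀).toReal :=
        ENNReal.toReal_mono (by simp [hη₀]) hle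
      rw [ENNReal.toReal_add (by simp [hη₀]) (by simp [hη₀]),
        ENNReal.toReal_ofReal (by positivity)] at this
      calc (μ Bad).toReal ≤ ε/(8*(C+1)) + ε/(8*(C+1)) := this
        _ = ε/(4*(C+1)) := by
            have hne : (C+1) ≠ 0 := by positivity
            field_simp
            ring
    calc ‖(∫ ω, f (Z n ω) ∂μ) - ∫ ω, g (X n ω) ∂μ‖
        = ‖∫ ω, (f (Z n ω) - f (c * X n ω)) ∂μ‖ := by
          rw [hgXeq, ← integral_sub hint1 (hgXeq ▸ hint2)]
      _ ≤ ∫ ω, |f (Z n ω) - f (c * X n ω)| ∂μ := by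
          simpa [Real.norm_eq_abs] using
            norm_integral_le_integral_norm (fun ω => f (Z n ω) - f (c * X n ω))
      _ ≤ ∫ ω, (ε/4 + Bad.indicator (fun _ => 2*C) ω) ∂μ := by
          refine integral_mono ((hint1.sub (hgXeq ▸ hint2)).abs)
            ((integrable_const _).add ((integrable_const (2*C)).indicator hBadm))
            fun ω => hptwise ω
      _ = ε/4 + 2*C*(μ Bad).toReal := by
          rw [integral_add (integrable_const _) ((integrable_const (2*C)).indicator hBadm),
            integral_const, integral_indicator_const _ hBadm]
          simp [measure_univ, mul_comm]; left; rfl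
      _ < ε := by
          have h6 : 2*C*(μ Bad).toReal ≤ 2*C*(ε/(4*(C+1))) :=
            mul_le_mul_of_nonneg_left hμBad (by positivity)
          have h7 : 2*C*(ε/(4*(C+1))) = (C/(C+1)) * (ε/2) := by
            field_simp; ring
          have h8 : C/(C+1) ≤ 1 := by
            rw [div_le_one (by positivity)]; linarith
          have h9 : (C/(C+1)) * (ε/2) ≤ ε/2 := by
            nlinarith [div_nonneg hC0 (by positivity : (0:ℝ) ≤ C+1)]
          linarith
  have := key.add hgX
  simp only [sub_add_cancel, zero_add] at this
  rw [hmap]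
  exact this

end SlutskyAux

open SlutskyAux

theorem stmt0 {Ω : Type*} [MeasurableSpace Ω] (μ : Measure Ω) [IsProbabilityMeasure μ]
    (U V : ℕ → Ω → ℝ) (hUm : ∀ n, Measurable (U n)) (hVm : ∀ n, Measurable (V n))
    (a b u v : ℕ → ℝ) (θU θV : ℝ) (vU vV : ℝ≥0)
    (ha : Tendsto a atTop atTop) (hb : Tendsto b atTop atTop)
    (hu : Tendsto u atTop (𝓝 θU)) (hv : Tendsto v atTop (𝓝 θV)) (hθV : θV ≠ 0)
    (hU : TendstoInDist μ (fun n ω => a n * (U n ω - u n)) (gaussianReal 0 vU))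
    (hV : TendstoInDist μ (fun n ω => b n * (V n ω - v n)) (gaussianReal 0 vV))
    (hab : Tendsto (fun n => a n / b n) atTop atTop) :
    TendstoInDist μ (fun n ω => b n * (U n ω / V n ω - u n / v n))
      (gaussianReal 0 (Real.toNNReal (θU ^ 2 * (vV : ℝ) / θV ^ 4))) := by
  classical
  have hbpos : ∀ᶠ n in atTop, 1 ≤ b n := hb.eventually_ge_atTop 1
  have hapos : ∀ᶠ n in atTop, 1 ≤ a n := ha.eventually_ge_atTop 1
  have hvne : ∀ᶠ n in atTop, v n ≠ 0 := hv.eventually_ne hθV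
  set X : ℕ → Ω → ℝ := fun n ω => b n * (V n ω - v n) with hXdef
  set Y : ℕ → Ω → ℝ := fun n ω => a n * (U n ω - u n) with hYdef
  have hXm : ∀ n, Measurable (X n) := fun n => ((hVm n).sub_const _).const_mul _
  have hYm : ∀ n, Measurable (Y n) := fun n => ((hUm n).sub_const _).const_mul _
  have hTX : Tight μ X := tight_of_tendstoInDist hXm hV
  have hTY : Tight μ Y := tight_of_tendstoInDist hYm hU
  have hba : Tendsto (fun n => b n / a n) atTop (𝓝 0) := by
    have h0 := hab.inv_tendsto_atTop
    have he : (fun n => a n / b n)⁻¹ = fun n => b n / a n := by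
      funext n; simp [Pi.inv_apply, inv_div]
    rwa [he] at h0
  have hbinv : Tendsto (fun n => (b n)⁻¹) atTop (𝓝 0) := hb.inv_tendsto_atTop
  -- V → θV in probability
  have hVp : TendstoP μ (fun n ω => V n ω - θV) := by
    have h1 : TendstoP μ (fun n ω => (b n)⁻¹ * X n ω + (v n - θV)) :=
      (hTX.mulP (tendstoP_det hbinv)).add (tendstoP_det (by simpa using hv.sub_const θV))
    refine h1.congr ?_
    filter_upwards [hbpos] with n hn ω
    have hbne : b n ≠ 0 := by linarith
    field_simp [hXdef]
    simp only [hXdef]; ring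
  have hVinv : TendstoP μ (fun n ω => (V n ω)⁻¹ - θV⁻¹) :=
    hVp.comp_continuousAt (g := fun x => x⁻¹) (continuousAt_inv₀ hθV)
  set c : ℝ := -(θU/θV^2) with hcdef
  -- the nice expression W
  set W : ℕ → Ω → ℝ := fun n ω =>
    (b n / a n * Y n ω) * (V n ω)⁻¹ +
      (θU/θV^2 - (u n / v n) * (V n ω)⁻¹) * X n ω with hWdef
  have hsn : Tendsto (fun n => u n / v n) atTop (𝓝 (θU/θV)) := hu.div hv hθV
  have hWp : TendstoP μ W := by
    refine TendstoP.add ?_ ?_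
    · exact (hTY.mulP (tendstoP_det hba)).mul hVinv
    · refine hTX.mulP ?_
      have h1 : TendstoP μ (fun n ω => (u n / v n) * ((V n ω)⁻¹ - θV⁻¹)) :=
        TendstoP.smul_bdd (B := |θU/θV| + 1)
          (hsn.abs.eventually (eventually_le_nhds (by linarith [abs_nonneg (θU/θV)]))) hVinv
      have h2 : TendstoP μ (fun n (_ : Ω) => (u n / v n - θU/θV) * θV⁻¹) :=
        tendstoP_det (by simpa using (hsn.sub_const (θU/θV)).mul_const θV⁻¹)
      have h3 := (h1.add h2).neg
      refine h3.congr (Eventually.of_forall fun n ω => ?_)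
      ring
  -- Z - cX →p 0
  set Z : ℕ → Ω → ℝ := fun n ω => b n * (U n ω / V n ω - u n / v n) with hZdef
  have hmain : TendstoP μ (fun n ω => Z n ω - c * X n ω) := by
    intro ε hε η hη
    have hzero : ∀ᶠ n in atTop, μ {ω | V n ω = 0} ≤ η/2 := by
      filter_upwards [hVp |θV| (abs_pos.mpr hθV) (η/2) (ENNReal.half_pos hη.ne')] with n hn
      refine le_trans (measure_mono ?_) hn
      intro ω hω
      simp only [Set.mem_setOf_eq] at *
      rw [hω, zero_sub, abs_neg]
    filter_upwards [hWp ε hε (η/2) (ENNReal.half_pos hη.ne'), hzero, hapos, hvne]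
      with n h1 h2 h3 h4
    have hane : a n ≠ 0 := by linarith
    calc μ {ω | ε ≤ |Z n ω - c * X n ω|}
        ≤ μ ({ω | ε ≤ |W n ω|} ∪ {ω | V n ω = 0}) := by
          refine measure_mono fun ω hω => ?_
          simp only [Set.mem_setOf_eq, Set.mem_union] at *
          by_cases hVω : V n ω = 0
          · exact Or.inr hVω
          · left
            have hid : Z n ω - c * X n ω = W n ω := by
              show b n * (U n ω / V n ω - u n / v n) - -(θU/θV^2) * (b n * (V n ω - v n)) =
                b n / a n * (a n * (U n ω - u n)) * (V n ω)⁻¹ +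
                  (θU/θV^2 - u n / v n * (V n ω)⁻¹) * (b n * (V n ω - v n))
              field_simp
              ring
            rwa [← hid]
      _ ≤ μ {ω | ε ≤ |W n ω|} + μ {ω | V n ω = 0} := measure_union_le _ _
      _ ≤ η/2 + η/2 := add_le_add h1 h2
      _ = η := ENNReal.add_halves η
  have hZm : ∀ n, Measurable (Z n) :=
    fun n => (((hUm n).div (hVm n)).sub_const _).const_mul _
  have hfinal := slutsky hXm hZm hV c hmain
  have hmeas : (gaussianReal 0 vV).map (fun x => c * x) =
      gaussianReal 0 (Real.toNNReal (θU ^ 2 * (vV : ℝ) / θV ^ 4)) := by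
    have hvv : (NNReal.mk (c^2) (sq_nonneg c) * vV : ℝ≥0) =
        Real.toNNReal (θU ^ 2 * (vV : ℝ) / θV ^ 4) := by
      apply NNReal.coe_injective
      rw [Real.coe_toNNReal _ (by positivity), NNReal.coe_mul]
      simp only [NNReal.coe_mk, hcdef]
      ring
    rw [show (fun x => c * x) = (c * ·) from rfl, gaussianReal_map_const_mul c, mul_zero, hvv]
  rwa [hmeas] at hfinal
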